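/- arXiv:1408.1681 — 6 statements merged into one kernel-verified Lean document; each statement's English description precedes it below -/
import Mathlib

section
/- For every integer ℓ ≥ 4, every integer r ≥ 1, and every real x with |x| ≤ 1/ℓ, the Fejér kernel satisfies 1 − 12 r ℓ² x² ≤ K_ℓ(x)^r ≤ 1 − ℓ² x² / 3. -/
/-! With `y = |x|`, the geometric sum gives `‖∑_{j<ℓ} e^{2πijx}‖ · |sin πy| = |sin ℓπy|`, so
`K_ℓ(x)` is the square of `sin(ℓπy) / (ℓ sin πy)`. The cubic Taylor bound on the numerator and
`sin t ≤ t` on the denominator give `K_ℓ(x) ≥ 1 - π²ℓ²x²/3` for every `x`. For `ℓy ≤ 1` and `ℓ ≥ 4`,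
`sin s = 2 sin(s/2) cos(s/2) ≤ s (1 - s²/2π²)` on the numerator and the cubic Taylor bound on the
denominator leave a polynomial inequality in `w = ℓ²x² ∈ [0, 1]`, which gives
`K_ℓ(x) ≤ 1 - ℓ²x²/3`. Bernoulli's inequality and `K_ℓ ≤ 1` pass both bounds to the `r`-th power. -/

/-- The normalized Fejér kernel of order `ℓ`:
`K_ℓ(x) = (1/ℓ²) |Σ_{j=0}^{ℓ-1} e^{2πijx}|²`. -/
noncomputable def fejer (ℓ : ℕ) (x : ℝ) : ℝ :=
  (1 / (ℓ : ℝ) ^ 2) *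
    ‖(∑ j ∈ Finset.range ℓ,
      Complex.exp (2 * Real.pi * Complex.I * (j : ℂ) * (x : ℂ)))‖ ^ 2

open Real

theorem one_sub_mul_le_pow {a b : ℝ} (ha : 0 ≤ a) (hab : 1 - b ≤ a) (n : ℕ) :
    1 - n * b ≤ a ^ n := by
  have hbern := one_add_mul_le_pow (show -2 ≤ a - 1 by linarith) n
  rw [add_sub_cancel] at hbern
  nlinarith [mul_le_mul_of_nonneg_left (show -b ≤ a - 1 by linarith) n.cast_nonneg]

theorem sin_le_mul_one_sub_sq {s : ℝ} (hs₀ : 0 ≤ s) (hsπ : s ≤ π) :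
    sin s ≤ s * (1 - s ^ 2 / (2 * π ^ 2)) := by
  have hcos : cos (s / 2) ≤ 1 - 2 / π ^ 2 * (s / 2) ^ 2 :=
    cos_le_one_sub_mul_cos_sq (by rw [abs_le]; constructor <;> linarith [pi_pos])
  have hcos₀ : 0 ≤ cos (s / 2) := cos_nonneg_of_mem_Icc ⟨by linarith [pi_pos], by linarith⟩
  calc sin s = 2 * sin (s / 2) * cos (s / 2) := by rw [← sin_two_mul]; ring_nf
    _ ≤ 2 * (s / 2) * (1 - 2 / π ^ 2 * (s / 2) ^ 2) := by
      gcongr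
      exact sin_le (by linarith)
    _ = s * (1 - s ^ 2 / (2 * π ^ 2)) := by field_simp

theorem abs_sin_mul_abs (c x : ℝ) : |sin (c * |x|)| = |sin (c * x)| := by
  rcases abs_choice x with h | h <;> simp [h]

theorem norm_sum_range_exp_mul_abs_sin (ℓ : ℕ) (x : ℝ) :
    ‖∑ j ∈ Finset.range ℓ, Complex.exp (2 * π * Complex.I * j * x)‖ * |sin (π * x)| =
      |sin (ℓ * π * x)| := by
  set z := Complex.exp (Complex.I * (2 * π * x : ℝ))
  have hpow : ∀ n : ℕ, Complex.exp (Complex.I * (2 * π * (n * x) : ℝ)) = z ^ n := by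
    intro n
    rw [← Complex.exp_nat_mul]
    push_cast
    ring_nf
  have hterm : ∀ j : ℕ, Complex.exp (2 * π * Complex.I * j * x) = z ^ j := by
    intro j
    rw [← hpow]
    push_cast
    ring_nf
  have hgeom := congrArg norm (geom_sum_mul z ℓ)
  rw [norm_mul, ← hpow, Complex.norm_exp_I_mul_ofReal_sub_one,
    Complex.norm_exp_I_mul_ofReal_sub_one] at hgeom
  simp only [Real.norm_eq_abs, abs_mul, abs_two] at hgeom
  rw [show 2 * π * (ℓ * x) / 2 = ℓ * π * x by ring, show 2 * π * x / 2 = π * x by ring] at hgeom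
  simp only [hterm]
  linarith

section DirichletRatio

variable {ℓ N y : ℝ}

theorem le_sq_of_mul_abs_sin_eq (hℓ : 0 ≤ ℓ) (hN : 0 ≤ N) (hy : 0 < y)
    (h : N * |sin (π * y)| = |sin (ℓ * π * y)|) :
    ℓ ^ 2 * (1 - π ^ 2 * (ℓ * y) ^ 2 / 3) ≤ N ^ 2 := by
  set a := π ^ 2 * (ℓ * y) ^ 2 / 6
  have hπy : 0 < π * y := by positivity
  have hsin : π * y * (ℓ * (1 - a)) ≤ π * y * N :=
    calc π * y * (ℓ * (1 - a)) = ℓ * π * y - (ℓ * π * y) ^ 3 / 6 := by ring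
      _ ≤ sin (ℓ * π * y) := sin_ge_sub_cube (by positivity)
      _ ≤ N * |sin (π * y)| := h ▸ le_abs_self _
      _ ≤ N * (π * y) := by
        gcongr
        exact abs_sin_le_abs.trans (abs_of_pos hπy).le
      _ = π * y * N := mul_comm _ _
  have hlin := le_of_mul_le_mul_left hsin hπy
  rw [show π ^ 2 * (ℓ * y) ^ 2 / 3 = 2 * a by ring]
  rcases le_total a 1 with ha | ha
  · calc ℓ ^ 2 * (1 - 2 * a) ≤ (ℓ * (1 - a)) ^ 2 := by nlinarith [sq_nonneg (ℓ * a)]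
      _ ≤ N ^ 2 := pow_le_pow_left₀ (by nlinarith) hlin 2
  · nlinarith [sq_nonneg ℓ, sq_nonneg N]

theorem mul_one_sub_le_of_mul_abs_sin_eq (hℓ : 4 ≤ ℓ) (hN : 0 ≤ N) (hy : 0 < y)
    (hℓy : ℓ * y ≤ 1) (h : N * |sin (π * y)| = |sin (ℓ * π * y)|) :
    N * (1 - (ℓ * y) ^ 2 / 9) ≤ ℓ * (1 - (ℓ * y) ^ 2 / 2) := by
  have hπ := pi_pos
  have hy₁ : y ≤ 1 := by nlinarith
  have hπy : π * y ≤ π := by nlinarith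
  have hℓπy : ℓ * π * y ≤ π := by nlinarith
  rw [abs_of_nonneg (sin_nonneg_of_nonneg_of_le_pi (by positivity) hπy),
    abs_of_nonneg (sin_nonneg_of_nonneg_of_le_pi (by positivity) hℓπy)] at h
  have hnum : sin (ℓ * π * y) ≤ π * y * (ℓ * (1 - (ℓ * y) ^ 2 / 2)) :=
    (sin_le_mul_one_sub_sq (by positivity) hℓπy).trans_eq (by field_simp)
  have hden : π * y * (1 - (ℓ * y) ^ 2 / 9) ≤ sin (π * y) := by
    have hπ₂ : 9 * π ^ 2 ≤ 6 * ℓ ^ 2 := by nlinarith [pi_lt_d2]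
    nlinarith [sin_ge_sub_cube (by positivity : 0 ≤ π * y),
      mul_le_mul_of_nonneg_left hπ₂ (pow_pos hy 3).le]
  refine le_of_mul_le_mul_left ?_ (mul_pos hπ hy)
  calc π * y * (N * (1 - (ℓ * y) ^ 2 / 9)) = N * (π * y * (1 - (ℓ * y) ^ 2 / 9)) := by ring
    _ ≤ N * sin (π * y) := by gcongr
    _ ≤ _ := h ▸ hnum

theorem sq_le_of_mul_abs_sin_eq (hℓ : 4 ≤ ℓ) (hN : 0 ≤ N) (hy : 0 < y)
    (hℓy : ℓ * y ≤ 1) (h : N * |sin (π * y)| = |sin (ℓ * π * y)|) :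
    N ^ 2 ≤ ℓ ^ 2 * (1 - (ℓ * y) ^ 2 / 3) := by
  set w := (ℓ * y) ^ 2
  have hw₀ : 0 ≤ w := sq_nonneg _
  have hw₁ : w ≤ 1 := pow_le_one₀ (mul_nonneg (by linarith) hy.le) hℓy
  have hpoly : (1 - w / 2) ^ 2 ≤ (1 - w / 3) * (1 - w / 9) ^ 2 := by
    nlinarith [mul_nonneg hw₀ (sub_nonneg.2 hw₁), mul_nonneg (mul_nonneg hw₀ hw₀) (sub_nonneg.2 hw₁)]
  have hratio := mul_one_sub_le_of_mul_abs_sin_eq hℓ hN hy hℓy h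
  refine le_of_mul_le_mul_right ?_ (show 0 < (1 - w / 9) ^ 2 by nlinarith)
  calc N ^ 2 * (1 - w / 9) ^ 2 = (N * (1 - w / 9)) ^ 2 := by ring
    _ ≤ (ℓ * (1 - w / 2)) ^ 2 := pow_le_pow_left₀ (by nlinarith) hratio 2
    _ = ℓ ^ 2 * (1 - w / 2) ^ 2 := by ring
    _ ≤ ℓ ^ 2 * ((1 - w / 3) * (1 - w / 9) ^ 2) := by gcongr
    _ = _ := by ring

end DirichletRatio

theorem fejer_eq_norm_sq_div (ℓ : ℕ) (x : ℝ) :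
    fejer ℓ x = ‖∑ j ∈ Finset.range ℓ, Complex.exp (2 * π * Complex.I * j * x)‖ ^ 2 / ℓ ^ 2 :=
  one_div_mul_eq_div _ _

theorem fejer_nonneg (ℓ : ℕ) (x : ℝ) : 0 ≤ fejer ℓ x := by
  unfold fejer
  positivity

theorem fejer_zero {ℓ : ℕ} (hℓ : ℓ ≠ 0) : fejer ℓ 0 = 1 := by
  simp [fejer_eq_norm_sq_div, hℓ]

theorem one_sub_le_fejer {ℓ : ℕ} (hℓ : ℓ ≠ 0) (x : ℝ) :
    1 - π ^ 2 * ℓ ^ 2 * x ^ 2 / 3 ≤ fejer ℓ x := by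
  rcases eq_or_ne x 0 with rfl | hx
  · simp [fejer_zero hℓ]
  have hN := le_sq_of_mul_abs_sin_eq (ℓ := ℓ) (by positivity) (norm_nonneg _) (abs_pos.2 hx)
    (by rw [abs_sin_mul_abs, abs_sin_mul_abs]; exact norm_sum_range_exp_mul_abs_sin ℓ x)
  rw [mul_pow, sq_abs] at hN
  rw [fejer_eq_norm_sq_div, le_div_iff₀ (by positivity)]
  linarith

theorem fejer_le_one_sub {ℓ : ℕ} (hℓ : 4 ≤ ℓ) {x : ℝ} (hx : |x| ≤ 1 / ℓ) :
    fejer ℓ x ≤ 1 - ℓ ^ 2 * x ^ 2 / 3 := by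
  rcases eq_or_ne x 0 with rfl | hx₀
  · simp [fejer_zero (by omega : ℓ ≠ 0)]
  have hℓ' : (4 : ℝ) ≤ ℓ := by exact_mod_cast hℓ
  have hN := sq_le_of_mul_abs_sin_eq hℓ' (norm_nonneg _) (abs_pos.2 hx₀)
    (by rwa [le_div_iff₀ (by positivity), mul_comm] at hx)
    (by rw [abs_sin_mul_abs, abs_sin_mul_abs]; exact norm_sum_range_exp_mul_abs_sin ℓ x)
  rw [mul_pow, sq_abs] at hN
  rw [fejer_eq_norm_sq_div, div_le_iff₀ (by positivity)]
  linarith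

theorem stmt5 (ℓ r : ℕ) (hℓ : 4 ≤ ℓ) (hr : 1 ≤ r) (x : ℝ)
    (hx : |x| ≤ 1 / (ℓ : ℝ)) :
    1 - 12 * (r : ℝ) * (ℓ : ℝ) ^ 2 * x ^ 2 ≤ (fejer ℓ x) ^ r ∧
      (fejer ℓ x) ^ r ≤ 1 - (ℓ : ℝ) ^ 2 * x ^ 2 / 3 := by
  have hK₀ := fejer_nonneg ℓ x
  have hupper := fejer_le_one_sub hℓ hx
  have hlower := one_sub_mul_le_pow hK₀ (one_sub_le_fejer (by omega) x) r
  have hπ : π ^ 2 / 3 ≤ 12 := by nlinarith [pi_lt_d2, pi_pos]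
  have hw : 0 ≤ (ℓ : ℝ) ^ 2 * x ^ 2 := by positivity
  have hK₁ : fejer ℓ x ≤ 1 := by linarith
  refine ⟨le_trans ?_ hlower, (pow_le_of_le_one hK₀ hK₁ (by omega)).trans hupper⟩
  nlinarith [mul_le_mul_of_nonneg_left hπ (mul_nonneg r.cast_nonneg hw)]
end

section
/- For every real x with 0 ≤ x < π, sin x ≤ x (1 − x²/10). -/
/-!
Integrating `x - x ^ 3 / 6 ≤ sin x` twice gives the Taylor bound
`sin x ≤ x - x ^ 3 / 6 + x ^ 5 / 120` for `x ≥ 0`, which is at most `x - x ^ 3 / 10` as long as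
`x ^ 2 ≤ 8`. Near `π` we use instead `sin x = sin (π - x) ≤ π - x`.
-/

open Real Set

theorem Real.cos_le_one_sub_sq_div_two_add_pow_four_div (x : ℝ) :
    cos x ≤ 1 - x ^ 2 / 2 + x ^ 4 / 24 := by
  wlog hx : 0 ≤ x
  · simpa [show (-x) ^ 4 = x ^ 4 by ring] using this (-x) (by linarith)
  let f (t : ℝ) : ℝ := 1 - t ^ 2 / 2 + t ^ 4 / 24 - cos t
  have hderiv (t : ℝ) : deriv f t = sin t - (t - t ^ 3 / 6) := by
    simp (disch := fun_prop) [f]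
    ring
  have hmono : MonotoneOn f (Ici 0) := by
    refine monotoneOn_of_deriv_nonneg (convex_Ici 0) (by fun_prop) (by fun_prop) fun t ht => ?_
    rw [interior_Ici] at ht
    simpa [hderiv] using sin_ge_sub_cube (le_of_lt ht)
  have := hmono self_mem_Ici hx hx
  simp only [f, ne_eq, OfNat.ofNat_ne_zero, not_false_eq_true, zero_pow, zero_div, sub_zero,
    add_zero, cos_zero, sub_self] at this
  linarith

theorem Real.sin_le_sub_cube_add_pow_five_div {x : ℝ} (hx : 0 ≤ x) :
    sin x ≤ x - x ^ 3 / 6 + x ^ 5 / 120 := by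
  let f (t : ℝ) : ℝ := t - t ^ 3 / 6 + t ^ 5 / 120 - sin t
  have hderiv (t : ℝ) : deriv f t = 1 - t ^ 2 / 2 + t ^ 4 / 24 - cos t := by
    simp (disch := fun_prop) [f]
    ring
  have hmono : MonotoneOn f (Ici 0) := by
    refine monotoneOn_of_deriv_nonneg (convex_Ici 0) (by fun_prop) (by fun_prop) fun t _ => ?_
    simpa [hderiv] using cos_le_one_sub_sq_div_two_add_pow_four_div t
  have := hmono self_mem_Ici hx hx
  simp only [f, ne_eq, OfNat.ofNat_ne_zero, not_false_eq_true, zero_pow, zero_div, add_zero,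
    sin_zero, sub_self] at this
  linarith

theorem stmt6 (x : ℝ) (hx0 : 0 ≤ x) (hxπ : x < Real.pi) :
    Real.sin x ≤ x * (1 - x ^ 2 / 10) := by
  rcases le_or_gt x (14 / 5) with hx | hx
  · have hx_sq : x ^ 2 ≤ 8 := by nlinarith
    calc sin x ≤ x - x ^ 3 / 6 + x ^ 5 / 120 := sin_le_sub_cube_add_pow_five_div hx0
      _ ≤ x * (1 - x ^ 2 / 10) := by
        nlinarith [mul_nonneg (pow_nonneg hx0 3) (sub_nonneg.2 hx_sq)]
  · have hπ : π < 3.15 := pi_lt_d2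
    calc sin x = sin (π - x) := (sin_pi_sub x).symm
      _ ≤ π - x := sin_le (by linarith)
      _ ≤ x * (1 - x ^ 2 / 10) := by
        -- `2 x - x ^ 3 / 10 - 3.15` dominates `(x - 2) (3.15 - x) (x + 5.15) / 10` for `x ≤ 4.2`
        nlinarith [mul_nonneg (mul_nonneg (by linarith : (0 : ℝ) ≤ x - 2)
          (by linarith : (0 : ℝ) ≤ 3.15 - x)) (by linarith : (0 : ℝ) ≤ x + 5.15)]
end

section
/- Let f_1, …, f_k ∈ [0,1) be distinct, set α_j = e^{2πi f_j}, let u_1, …, u_k ∈ ℂ be all nonzero, and let m ≥ k be an integer. Let V = V_m^k be the m × k Vandermonde matrix with entries α_j^ℓ (ℓ = 0, …, m−1), let D_u = diag(u_1, …, u_k) and D_α = diag(α_1, …, α_k), and set A = V D_u V^H and B = V D_u D_α V^H (V^H the conjugate transpose). Then the set { λ ∈ ℂ : there exists x ∈ ℂ^m with B x = λ A x and A x ≠ 0 } is exactly {α_1, …, α_k}. -/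
/-!
Since `V` has trivial kernel, `B x = λ A x` means `D_u D_α y = λ D_u y` for `y = Vᴴ x`, so `λ = α_j` at any
coordinate `j` where `u_j y_j ≠ 0`. Conversely, `Vᴴ` is surjective (its Gram matrix `Vᴴ V` is
invertible), so some `x` has `Vᴴ x = e_j`, and this `x` is a generalized eigenvector for `α_j`.
The Vandermonde matrix `V` is injective because the `α_j` are distinct points of the unit circle.
-/

open Matrix Set

lemma Complex.exp_two_pi_mul_I_mul_injOn_Ico :
    InjOn (fun t : ℝ => Complex.exp (2 * Real.pi * Complex.I * t)) (Ico 0 1) := by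
  intro s hs t ht hst
  have hπ : 0 < 2 * Real.pi := by positivity
  have hangle : 2 * Real.pi * s = 2 * Real.pi * t := by
    refine Circle.exp_injOn_Ico (a := 0) (b := 2 * Real.pi) (by simp)
      ⟨by nlinarith [hs.1], by nlinarith [hs.2]⟩ ⟨by nlinarith [ht.1], by nlinarith [ht.2]⟩ ?_
    ext
    simpa only [Circle.coe_exp, Complex.ofReal_mul, Complex.ofReal_ofNat, mul_comm,
      mul_left_comm] using hst
  exact mul_left_cancel₀ hπ.ne' hangle

namespace Matrix

lemma mulVec_of_pow_injective {R : Type*} [CommRing R] [IsDomain R] {k m : ℕ} {α : Fin k → R}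
    (hα : Function.Injective α) (hkm : k ≤ m) :
    Function.Injective (of fun (ℓ : Fin m) (j : Fin k) => α j ^ (ℓ : ℕ)).mulVec := by
  refine (injective_iff_map_eq_zero (mulVecLin _)).mpr fun y hy => ?_
  refine eq_zero_of_forall_pow_sum_mul_pow_eq_zero hα fun i => ?_
  simpa [mulVec, dotProduct, mul_comm] using congrFun hy (Fin.castLE hkm i)

variable {K : Type*} [Field K] {m k : Type*} [Fintype m] [Fintype k] [DecidableEq k]

def pencilEigenvalues (A B : Matrix m m K) : Set K :=
  {lam | ∃ x, B *ᵥ x = lam • A *ᵥ x ∧ A *ᵥ x ≠ 0}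

lemma pencilEigenvalues_factored_subset {V : Matrix m k K} (hV : Function.Injective V.mulVec)
    (W : Matrix k m K) (u α : k → K) :
    pencilEigenvalues (V * diagonal u * W) (V * diagonal u * diagonal α * W) ⊆ range α := by
  rintro lam ⟨x, hBA, hA⟩
  simp only [← mulVec_mulVec] at hBA hA
  rw [← mulVec_smul] at hBA
  have hpencil := congrFun (hV hBA)
  have hy : diagonal u *ᵥ W *ᵥ x ≠ 0 := fun h => hA (by rw [h, mulVec_zero])
  obtain ⟨j, hj⟩ := Function.ne_iff.mp hy
  refine ⟨j, ?_⟩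
  simp only [mulVec_diagonal, Pi.smul_apply, smul_eq_mul, Pi.zero_apply] at hpencil hj
  have hprod : (α j - lam) * (u j * (W *ᵥ x) j) = 0 := by linear_combination hpencil j
  exact sub_eq_zero.mp ((mul_eq_zero.mp hprod).resolve_right hj)

lemma range_subset_pencilEigenvalues_factored {V : Matrix m k K}
    (hV : Function.Injective V.mulVec) {W : Matrix k m K} (hW : Function.Surjective W.mulVec)
    {u : k → K} (hu : ∀ j, u j ≠ 0) (α : k → K) :
    range α ⊆ pencilEigenvalues (V * diagonal u * W) (V * diagonal u * diagonal α * W) := by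
  rintro _ ⟨j, rfl⟩
  obtain ⟨x, hx⟩ := hW (Pi.single j 1)
  refine ⟨x, ?_, ?_⟩
  · simp only [← mulVec_mulVec, hx, diagonal_mulVec_single]
    rw [← mulVec_smul, ← Pi.single_smul', smul_eq_mul]
    congr 2
    ring
  · simp only [← mulVec_mulVec, hx, diagonal_mulVec_single, mul_one]
    rw [← V.mulVec_zero]
    exact hV.ne (by simpa using hu j)

lemma pencilEigenvalues_factored {V : Matrix m k K} (hV : Function.Injective V.mulVec)
    {W : Matrix k m K} (hW : Function.Surjective W.mulVec) {u : k → K} (hu : ∀ j, u j ≠ 0)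
    (α : k → K) :
    pencilEigenvalues (V * diagonal u * W) (V * diagonal u * diagonal α * W) = range α :=
  (pencilEigenvalues_factored_subset hV W u α).antisymm
    (range_subset_pencilEigenvalues_factored hV hW hu α)

lemma mulVec_conjTranspose_surjective [PartialOrder K] [StarRing K] [StarOrderedRing K]
    {V : Matrix m k K} (hV : Function.Injective V.mulVec) : Function.Surjective Vᴴ.mulVec := by
  have hGram : Function.Injective (Vᴴ * V).mulVec := by
    refine (injective_iff_map_eq_zero (mulVecLin (Vᴴ * V))).mpr fun y hy => ?_
    exact (injective_iff_map_eq_zero (mulVecLin V)).mp hV y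
      ((conjTranspose_mul_self_mulVec_eq_zero V y).mp hy)
  have hGram_surj := mulVec_surjective_iff_isUnit.mpr (mulVec_injective_iff_isUnit.mp hGram)
  intro y
  obtain ⟨x, hx⟩ := hGram_surj y
  exact ⟨V *ᵥ x, by rwa [mulVec_mulVec]⟩

end Matrix

theorem stmt7 (k m : ℕ) (hkm : k ≤ m)
    (f : Fin k → ℝ) (hf : ∀ j, f j ∈ Set.Ico (0 : ℝ) 1)
    (hinj : Function.Injective f)
    (u : Fin k → ℂ) (hu : ∀ j, u j ≠ 0)
    (α : Fin k → ℂ) (hα : ∀ j, α j = Complex.exp (2 * Real.pi * Complex.I * (f j : ℂ)))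
    (V : Matrix (Fin m) (Fin k) ℂ) (hV : ∀ ℓ j, V ℓ j = α j ^ (ℓ : ℕ)) :
    {lam : ℂ | ∃ x : Fin m → ℂ,
        (V * Matrix.diagonal u * Matrix.diagonal α * Vᴴ).mulVec x =
          lam • (V * Matrix.diagonal u * Vᴴ).mulVec x ∧
        (V * Matrix.diagonal u * Vᴴ).mulVec x ≠ 0} = Set.range α := by
  have hα_inj : Function.Injective α := fun i j hij =>
    hinj (Complex.exp_two_pi_mul_I_mul_injOn_Ico (hf i) (hf j) (by simpa only [hα] using hij))
  have hV_inj : Function.Injective V.mulVec := by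
    rw [show V = of fun (ℓ : Fin m) j => α j ^ (ℓ : ℕ) from ext hV]
    exact mulVec_of_pow_injective hα_inj hkm
  have hVH_surj : Function.Surjective Vᴴ.mulVec :=
    open ComplexOrder in mulVec_conjTranspose_surjective hV_inj
  exact pencilEigenvalues_factored hV_inj hVH_surj hu α
end

section
/- Let ε ∈ (0,1) be such that ℓ := 4/ε is a positive integer, let r be a positive integer, set k := 2rℓ + 1, and let m be a positive integer. Then there exists u ∈ ℂ^k with Σ_{j=0}^{k−1} |u_j| = 1 such that for every integer t with |t| ≤ (1−ε)m/2, | Σ_{j=0}^{k−1} u_j e^{2πi j t / m} | ≤ 2^{−ε(k−1)/2}. -/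
/-!
Take `u j = (-1)^j c_j / ℓ^(2r)`, where `c_j` are the coefficients of `g^(2r)` with
`g = 1 + X + ⋯ + X^(ℓ-1)`: on the unit circle `|g|^(2r)` is the `r`-th power of the Fejér kernel,
and the signs move it to frequency `1/2`.
With `ω = exp(2πit/m)` the measured sum is `g(v)^(2r) / ℓ^(2r)` for `v = -ω`. For
`|t| ≤ (1-ε)m/2` the point `v` stays at distance at least `2ε` from `1`, so
`|g(v)| = |v^ℓ - 1| / |v - 1| ≤ 1/ε = ℓ/4`, and the sum is at most `4^(-2r) = 2^(-ε(k-1)/2)`.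
-/

open Polynomial Finset

theorem norm_geom_sum_le_of_le_norm_sub_one {v : ℂ} (hv : ‖v‖ = 1) {δ : ℝ} (hδ : 0 < δ)
    (hvδ : δ ≤ ‖v - 1‖) (n : ℕ) : ‖∑ i ∈ range n, v ^ i‖ ≤ 2 / δ := by
  rw [le_div_iff₀ hδ]
  calc ‖∑ i ∈ range n, v ^ i‖ * δ ≤ ‖∑ i ∈ range n, v ^ i‖ * ‖v - 1‖ := by gcongr
    _ = ‖v ^ n - 1‖ := by rw [← norm_mul, geom_sum_mul]
    _ ≤ ‖v ^ n‖ + ‖(1 : ℂ)‖ := norm_sub_le _ _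
    _ = 2 := by rw [norm_pow, hv]; norm_num

theorem Complex.norm_exp_ofReal_mul_I_add_one (θ : ℝ) :
    ‖exp (θ * I) + 1‖ = 2 * |Real.cos (θ / 2)| := by
  have h : exp (θ * I) + 1 = -(exp (I * ↑(θ + Real.pi)) - 1) := by
    rw [ofReal_add, mul_add, exp_add, mul_comm I Real.pi, exp_pi_mul_I, mul_comm I]
    ring
  rw [h, norm_neg, norm_exp_I_mul_ofReal_sub_one, add_div, Real.sin_add_pi_div_two,
    Real.norm_eq_abs, abs_mul, abs_two]

theorem Complex.le_norm_exp_ofReal_mul_I_add_one {θ : ℝ} (hθ : |θ| ≤ Real.pi) :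
    2 * (Real.pi - |θ|) / Real.pi ≤ ‖exp (θ * I) + 1‖ := by
  have hπ := Real.pi_pos
  have hsin := Real.mul_le_sin (x := Real.pi / 2 - |θ| / 2) (by linarith) (by linarith [abs_nonneg θ])
  have hcos : Real.cos (|θ| / 2) = Real.cos (θ / 2) := by
    rw [← abs_two, ← abs_div, Real.cos_abs, abs_two]
  rw [Real.sin_pi_div_two_sub, hcos] at hsin
  rw [norm_exp_ofReal_mul_I_add_one]
  calc 2 * (Real.pi - |θ|) / Real.pi = 2 * (2 / Real.pi * (Real.pi / 2 - |θ| / 2)) := by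
        field_simp
    _ ≤ 2 * |Real.cos (θ / 2)| := by gcongr; exact hsin.trans (le_abs_self _)

theorem Complex.two_mul_le_norm_exp_add_one {ε : ℝ} (hε : 0 ≤ ε) {m t : ℝ} (hm : 0 < m)
    (ht : |t| ≤ (1 - ε) * m / 2) : 2 * ε ≤ ‖exp (↑(2 * Real.pi * t / m) * I) + 1‖ := by
  have hπ := Real.pi_pos
  have hθ : |2 * Real.pi * t / m| ≤ (1 - ε) * Real.pi := by
    rw [abs_div, abs_mul, abs_of_pos (by positivity : 0 < 2 * Real.pi), abs_of_pos hm,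
      div_le_iff₀ hm]
    calc 2 * Real.pi * |t| ≤ 2 * Real.pi * ((1 - ε) * m / 2) := by gcongr
      _ = _ := by ring
  refine le_trans ?_ (le_norm_exp_ofReal_mul_I_add_one (hθ.trans (by nlinarith)))
  rw [le_div_iff₀ hπ]
  nlinarith

namespace Polynomial

noncomputable def normalizedAlternatingCoeffs (P : ℕ[X]) (k : ℕ) (j : Fin k) : ℂ :=
  (-1) ^ (j : ℕ) * P.coeff j / P.eval 1

variable {P : ℕ[X]} {k : ℕ}

theorem sum_norm_normalizedAlternatingCoeffs (hk : P.natDegree < k) (hP : P.eval 1 ≠ 0) :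
    ∑ j, ‖normalizedAlternatingCoeffs P k j‖ = 1 := by
  have hsum : ∑ j ∈ range k, (P.coeff j : ℝ) = P.eval 1 := by
    simpa using congrArg (Nat.cast (R := ℝ)) (eval_eq_sum_range' hk 1).symm
  simp only [normalizedAlternatingCoeffs, norm_div, norm_mul, norm_pow, norm_neg, norm_one,
    one_pow, one_mul, Complex.norm_natCast]
  rw [Fin.sum_univ_eq_sum_range (fun j => (P.coeff j : ℝ) / P.eval 1), ← sum_div, hsum,
    div_self (by exact_mod_cast hP)]

theorem sum_normalizedAlternatingCoeffs_mul_pow (hk : P.natDegree < k) (z : ℂ) :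
    ∑ j, normalizedAlternatingCoeffs P k j * z ^ (j : ℕ) = aeval (-z) P / P.eval 1 := by
  rw [aeval_eq_sum_range' hk, sum_div,
    ← Fin.sum_univ_eq_sum_range (fun j => P.coeff j • (-z) ^ j / P.eval 1)]
  refine Fintype.sum_congr _ _ fun j => ?_
  rw [normalizedAlternatingCoeffs, neg_pow, nsmul_eq_mul]
  ring

end Polynomial

theorem natDegree_geom_sum_pow_le (ℓ n : ℕ) :
    ((∑ i ∈ range ℓ, X ^ i : ℕ[X]) ^ n).natDegree ≤ n * (ℓ - 1) :=
  natDegree_pow_le_of_le n <| natDegree_sum_le_of_forall_le _ _ fun i hi => by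
    rw [natDegree_X_pow]; exact Nat.le_sub_one_of_lt (mem_range.mp hi)

theorem two_rpow_neg_eq_quarter_pow {ε : ℝ} {ℓ : ℕ} (hεℓ : ε * ℓ = 4) (r : ℕ) :
    (2 : ℝ) ^ (-(ε * (((2 * r * ℓ + 1 : ℕ) : ℝ) - 1) / 2)) = (1 / 4) ^ (2 * r) := by
  have hrate : ε * (((2 * r * ℓ + 1 : ℕ) : ℝ) - 1) / 2 = ((4 * r : ℕ) : ℝ) := by
    push_cast; linear_combination (r : ℝ) * hεℓ
  rw [hrate, Real.rpow_neg zero_le_two, Real.rpow_natCast, pow_mul, pow_mul, ← inv_pow]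
  norm_num

theorem stmt8_general (ε : ℝ) (hε0 : 0 < ε) (ℓ r k m : ℕ)
    (hℓ : 0 < ℓ) (hℓε : (ℓ : ℝ) = 4 / ε)
    (hk : k = 2 * r * ℓ + 1) (hm : 0 < m) :
    ∃ u : Fin k → ℂ, (∑ j, ‖u j‖) = 1 ∧
      ∀ t : ℤ, (|t| : ℝ) ≤ (1 - ε) * (m : ℝ) / 2 →
        ‖(∑ j : Fin k,
            u j * Complex.exp (2 * Real.pi * Complex.I * ((j : ℕ) : ℂ) * (t : ℂ) / (m : ℂ)))‖
          ≤ (2 : ℝ) ^ (-(ε * ((k : ℝ) - 1) / 2)) := by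
  subst hk
  set P : ℕ[X] := (∑ i ∈ range ℓ, X ^ i) ^ (2 * r)
  have hdeg : P.natDegree < 2 * r * ℓ + 1 :=
    (natDegree_geom_sum_pow_le ℓ (2 * r)).trans_lt
      (Nat.lt_succ_of_le (Nat.mul_le_mul_left _ (Nat.sub_le ℓ 1)))
  have hP1 : P.eval 1 = ℓ ^ (2 * r) := by simp [P]
  refine ⟨normalizedAlternatingCoeffs P _,
    sum_norm_normalizedAlternatingCoeffs hdeg (by rw [hP1]; positivity), fun t ht => ?_⟩
  set z := Complex.exp (↑(2 * Real.pi * t / m) * Complex.I)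
  have hpow : ∀ j : ℕ,
      Complex.exp (2 * Real.pi * Complex.I * (j : ℂ) * (t : ℂ) / (m : ℂ)) = z ^ j := by
    intro j
    rw [← Complex.exp_nat_mul]
    push_cast
    ring_nf
  have hgeom : ‖∑ i ∈ range ℓ, (-z) ^ i‖ ≤ ℓ / 4 := by
    have hz : 2 * ε ≤ ‖-z - 1‖ := by
      rw [show -z - 1 = -(z + 1) by ring, norm_neg]
      exact Complex.two_mul_le_norm_exp_add_one hε0.le (by exact_mod_cast hm) ht
    convert norm_geom_sum_le_of_le_norm_sub_one (v := -z)
      (by rw [norm_neg, Complex.norm_exp_ofReal_mul_I]) (by positivity) hz ℓ using 1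
    rw [hℓε]; field_simp
  simp_rw [hpow, sum_normalizedAlternatingCoeffs_mul_pow hdeg, hP1, P, map_pow, map_sum,
    aeval_X_pow, norm_div, norm_pow]
  rw [two_rpow_neg_eq_quarter_pow (by rw [hℓε]; field_simp), Complex.norm_natCast, Nat.cast_pow,
    ← div_pow]
  refine pow_le_pow_left₀ (by positivity) ?_ _
  rw [div_le_iff₀ (by positivity)]
  linarith

theorem stmt8 (ε : ℝ) (hε0 : 0 < ε) (hε1 : ε < 1) (ℓ r k m : ℕ)
    (hℓ : 0 < ℓ) (hℓε : (ℓ : ℝ) = 4 / ε) (hr : 0 < r)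
    (hk : k = 2 * r * ℓ + 1) (hm : 0 < m) :
    ∃ u : Fin k → ℂ, (∑ j, ‖u j‖) = 1 ∧
      ∀ t : ℤ, (|t| : ℝ) ≤ (1 - ε) * (m : ℝ) / 2 →
        ‖(∑ j : Fin k,
            u j * Complex.exp (2 * Real.pi * Complex.I * ((j : ℕ) : ℂ) * (t : ℂ) / (m : ℂ)))‖
          ≤ (2 : ℝ) ^ (-(ε * ((k : ℝ) - 1) / 2)) :=
  stmt8_general ε hε0 ℓ r k m hℓ hℓε hk hm
end

section
/- Let ε ∈ (0,1) be such that 4/ε is a positive integer, let r be a positive integer, set k := 2r(4/ε) + 1, let m be an even positive integer with m ≥ 2k, and set Δ = 2/m. Then there exist two disjoint nonempty finite sets S, S' ⊂ [0,1), each of cardinality at most k and each Δ-separated (d_w(f, g) ≥ Δ for all distinct f, g in the same set), together with coefficients a : S → ℂ and b : S' → ℂ with Σ_{f∈S} |a_f| + Σ_{g∈S'} |b_g| = 1, such that for every integer t with |t| ≤ (1−ε)/Δ, | Σ_{f∈S} a_f e^{2πi f t} − Σ_{g∈S'} b_g e^{2πi g t} | ≤ 2^{−ε(k−1)/2}. 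-/
/-!
Let `c = cos (π (1 - ε))` and `B(z) = z ^ p T_p ((z + z⁻¹ - (1 + c)) / (1 - c))` with `p = 2ℓ`, a
polynomial of degree `2p`. For `z = e^{iθ}` with `cos θ ≥ c` the argument of the Chebyshev
polynomial `T_p` is a real number in `[-1, 1]`, so `|B(z)| ≤ 1` on that arc of the unit circle,
while `B(-1) = T_p ((3 + c) / (1 - c))` is large because `T_n(y) ≥ 1 + n² (y - 1)` for `y ≥ 1`.

Write `Q = B ^ r = ∑ q_u z ^ u` (degree `2(k - 1)`) and `L = ∑ |q_u|`. Place the weight `q_u / L` at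
`u / m`, even `u` in `S` and odd `u` in `S'` (the latter with its sign flipped). The measurement at
frequency `t` is then `Q(e^{2πit/m}) / L`; for `|t| ≤ (1 - ε) m / 2` the point `e^{2πit/m}` lies on
the arc, so this is at most `1 / |Q(-1)| ≤ 16⁻ʳ = 2 ^ (-ε (k - 1) / 2)`.
-/

/-- The wrap-around metric on `[0,1)`: `dw f g = min_{t ∈ ℤ} |f - g + t|`. -/
noncomputable def dw (f g : ℝ) : ℝ := ⨅ t : ℤ, |f - g + (t : ℝ)|

open Finset Polynomial Polynomial.Chebyshev Real

namespace Polynomial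

variable {K : Type*} [Field K]

noncomputable def joukowskiPullback (P : K[X]) (n : ℕ) : K[X] :=
  MvPolynomial.aeval ![X ^ 2 + 1, X] (P.homogenize n)

theorem natDegree_joukowskiPullback_le (P : K[X]) (n : ℕ) :
    (joukowskiPullback P n).natDegree ≤ n * 2 :=
  MvPolynomial.aeval_natDegree_le _ (isHomogeneous_homogenize P).totalDegree_le _ fun i => by
    fin_cases i <;> simp; compute_degree

theorem eval_joukowskiPullback {P : K[X]} {n : ℕ} (hP : P.natDegree ≤ n) {z : K} (hz : z ≠ 0) :
    (joukowskiPullback P n).eval z = P.eval (z + z⁻¹) * z ^ n := by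
  rw [joukowskiPullback, ← coe_aeval_eq_eval, MvPolynomial.comp_aeval_apply,
    MvPolynomial.aeval_eq_eval, eval_homogenize hP _ (by simpa using hz)]
  simp [add_div, sq, hz]

end Polynomial

namespace Polynomial.Chebyshev

theorem one_add_sq_mul_sub_one_le_eval_T_real {y : ℝ} (hy : 1 ≤ y) (n : ℕ) :
    1 + n ^ 2 * (y - 1) ≤ (T ℝ n).eval y := by
  -- The increments grow: `T (n + 2) - T (n + 1) = T (n + 1) - T n + 2 (y - 1) T (n + 1)`.
  suffices key : 1 + n ^ 2 * (y - 1) ≤ (T ℝ n).eval y ∧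
      (T ℝ n).eval y + (2 * n + 1) * (y - 1) ≤ (T ℝ (n + 1)).eval y from key.1
  induction n with
  | zero => simp
  | succ n ih =>
    obtain ⟨hn, hn'⟩ := ih
    have hrec : (T ℝ ((n : ℤ) + 1 + 1)).eval y =
        2 * y * (T ℝ (n + 1)).eval y - (T ℝ n).eval y := by
      rw [add_assoc, one_add_one_eq_two, T_add_two]; simp
    have hpos : 0 ≤ (y - 1) * ((T ℝ (n + 1)).eval y - 1) :=
      mul_nonneg (by linarith) (by nlinarith)
    push_cast
    rw [hrec]
    constructor <;> nlinarith

theorem norm_eval_T_complex_ofReal_le_one {x : ℝ} (hx : |x| ≤ 1) (n : ℤ) :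
    ‖(T ℂ n).eval (x : ℂ)‖ ≤ 1 := by
  rw [← complex_ofReal_eval_T, Complex.norm_real]
  exact abs_eval_T_real_le_one n hx

end Polynomial.Chebyshev

noncomputable def arcChebyshev (c : ℝ) (p : ℕ) : ℂ[X] :=
  joukowskiPullback ((T ℂ p).comp (C ((1 - c : ℂ)⁻¹) * (X - C (1 + c : ℂ)))) p

theorem eval_arcChebyshev (c : ℝ) (p : ℕ) {z : ℂ} (hz : z ≠ 0) :
    (arcChebyshev c p).eval z = (T ℂ p).eval ((z + z⁻¹ - (1 + c)) / (1 - c)) * z ^ p := by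
  have hdeg : ((T ℂ p).comp (C ((1 - c : ℂ)⁻¹) * (X - C (1 + c : ℂ)))).natDegree ≤ p :=
    natDegree_comp_le.trans <| by
      rw [natDegree_T, Int.natAbs_natCast]
      exact (Nat.mul_le_mul_left p (by compute_degree)).trans_eq (mul_one p)
  rw [arcChebyshev, eval_joukowskiPullback hdeg hz]
  simp [div_eq_inv_mul]

theorem natDegree_arcChebyshev_le (c : ℝ) (p : ℕ) : (arcChebyshev c p).natDegree ≤ p * 2 :=
  natDegree_joukowskiPullback_le _ _

theorem norm_eval_arcChebyshev_exp_le {c θ : ℝ} (hθ : c ≤ cos θ) (p : ℕ) :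
    ‖(arcChebyshev c p).eval (Complex.exp (θ * Complex.I))‖ ≤ 1 := by
  have hx : (Complex.exp (θ * Complex.I) + (Complex.exp (θ * Complex.I))⁻¹ - (1 + c)) / (1 - c)
      = ((2 * cos θ - (1 + c)) / (1 - c) : ℝ) := by
    rw [← Complex.exp_neg, ← neg_mul, ← Complex.two_cos]; push_cast; rfl
  have hx_le : |(2 * cos θ - (1 + c)) / (1 - c)| ≤ 1 := by
    rcases (hθ.trans (cos_le_one θ)).lt_or_eq with hc | rfl
    · rw [abs_div, abs_of_pos (sub_pos.2 hc), div_le_one (sub_pos.2 hc), abs_le]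
      constructor <;> linarith [cos_le_one θ]
    · simp
  rw [eval_arcChebyshev c p (Complex.exp_ne_zero _), hx, norm_mul, norm_pow,
    Complex.norm_exp_ofReal_mul_I, one_pow, mul_one]
  exact norm_eval_T_complex_ofReal_le_one hx_le p

theorem le_norm_eval_arcChebyshev_neg_one {c : ℝ} (hc₀ : -1 ≤ c) (hc : c < 1) {p : ℕ}
    (hp : Even p) : 1 + p ^ 2 * (2 * (1 + c) / (1 - c)) ≤ ‖(arcChebyshev c p).eval (-1)‖ := by
  have hx : ((-1 : ℂ) + (-1)⁻¹ - (1 + c)) / (1 - c) = -(((3 + c) / (1 - c) : ℝ) : ℂ) := by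
    push_cast; ring
  have hy : 1 ≤ (3 + c) / (1 - c) := by rw [le_div_iff₀ (sub_pos.2 hc)]; linarith
  have hy' : (3 + c) / (1 - c) - 1 = 2 * (1 + c) / (1 - c) := by
    field_simp [(sub_pos.2 hc).ne']; ring
  rw [eval_arcChebyshev c p (by norm_num), hp.neg_one_pow, mul_one, hx, T_eval_neg,
    Int.negOnePow_even _ ((Int.even_coe_nat p).2 hp), Units.val_one, Int.cast_one, one_mul,
    ← complex_ofReal_eval_T, Complex.norm_real, ← hy']
  exact (one_add_sq_mul_sub_one_le_eval_T_real hy p).trans (Real.le_norm_self _)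

theorem Real.cos_le_cos_of_abs_le {x y : ℝ} (hxy : |x| ≤ y) (hy : y ≤ π) : cos y ≤ cos x := by
  rw [← cos_abs x]
  exact cos_le_cos_of_nonneg_of_le_pi (abs_nonneg x) hy hxy

theorem norm_eval_arcChebyshev_exp_le_of_abs_le {ε : ℝ} (hε : 0 ≤ ε) {m : ℕ} (hm : 0 < m)
    {t : ℤ} (ht : (|t| : ℝ) ≤ (1 - ε) / (2 / m)) (p : ℕ) :
    ‖(arcChebyshev (cos (π * (1 - ε))) p).eval (Complex.exp (2 * π * Complex.I * t / m))‖ ≤ 1 := by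
  have hm' : (0 : ℝ) < m := by exact_mod_cast hm
  have hθ : |2 * π * t / m| ≤ π * (1 - ε) := by
    rw [abs_div, abs_mul, abs_of_pos (by positivity : 0 < 2 * π), abs_of_pos hm', div_le_iff₀ hm']
    rw [div_div_eq_mul_div, le_div_iff₀ (by norm_num)] at ht
    nlinarith [pi_pos]
  rw [show 2 * π * Complex.I * t / m = ((2 * π * t / m : ℝ) : ℂ) * Complex.I by push_cast; ring]
  exact norm_eval_arcChebyshev_exp_le (cos_le_cos_of_abs_le hθ (by nlinarith [pi_pos])) p

theorem one_add_mul_sq_le_norm_eval_arcChebyshev_neg_one {ε : ℝ} (hε0 : 0 < ε) (hε1 : ε < 1)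
    (ℓ : ℕ) : 1 + 8 * (ℓ * ε) ^ 2 ≤ ‖(arcChebyshev (cos (π * (1 - ε))) (2 * ℓ)).eval (-1)‖ := by
  have hcos : cos (π * (1 - ε)) = -cos (π * ε) := by rw [mul_one_sub, cos_pi_sub]
  set c := cos (π * (1 - ε))
  have hc₀ : -1 ≤ c := neg_one_le_cos _
  have hc₁ : c < 1 := by
    simpa using cos_lt_cos_of_nonneg_of_le_pi le_rfl (by nlinarith [pi_pos])
      (by nlinarith [pi_pos] : 0 < π * (1 - ε))
  have hc : 2 * ε ^ 2 ≤ 1 + c := by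
    have h := cos_le_one_sub_mul_cos_sq (x := π * ε) (by
      rw [abs_of_pos (by positivity)]; nlinarith [pi_pos])
    rw [hcos]
    field_simp at h
    nlinarith [pi_pos]
  have hdiv : 1 + c ≤ 2 * (1 + c) / (1 - c) := by
    rw [le_div_iff₀ (by linarith)]; nlinarith
  refine le_trans ?_ (le_norm_eval_arcChebyshev_neg_one hc₀ hc₁ (even_two_mul ℓ))
  push_cast
  nlinarith [sq_nonneg (ℓ : ℝ)]

theorem le_dw {δ x y : ℝ} (h₁ : δ ≤ |x - y|) (h₂ : |x - y| ≤ 1 - δ) : δ ≤ dw x y := by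
  refine le_ciInf fun t => ?_
  rcases eq_or_ne t 0 with rfl | ht
  · simpa using h₁
  · have ht₁ : (1 : ℝ) ≤ |(t : ℝ)| := by exact_mod_cast Int.one_le_abs ht
    have := abs_sub_abs_le_abs_add (t : ℝ) (x - y)
    rw [add_comm] at this
    linarith

theorem two_div_le_dw_div {m u v : ℕ} (huv : u + 2 ≤ v ∨ v + 2 ≤ u) (hu : u + 2 ≤ m)
    (hv : v + 2 ≤ m) : 2 / (m : ℝ) ≤ dw (u / m) (v / m) := by
  have hm : (0 : ℝ) < m := by exact_mod_cast (by omega : 0 < m)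
  have hdist : 2 ≤ |(u : ℝ) - v| ∧ |(u : ℝ) - v| ≤ m - 2 := by
    have key : ∀ {a b : ℕ}, a + 2 ≤ b → b + 2 ≤ m → 2 ≤ |(a : ℝ) - b| ∧ |(a : ℝ) - b| ≤ m - 2 := by
      intro a b hab hb
      have hab' : (a : ℝ) + 2 ≤ b := by exact_mod_cast hab
      have hb' : (b : ℝ) + 2 ≤ m := by exact_mod_cast hb
      rw [abs_sub_comm, abs_of_pos (by linarith)]
      constructor <;> linarith [a.cast_nonneg (α := ℝ)]
    rcases huv with h | h
    · exact key h hv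
    · rw [abs_sub_comm]; exact key h hu
  apply le_dw <;> rw [← sub_div, abs_div, abs_of_pos hm]
  · exact div_le_div_of_nonneg_right hdist.1 hm.le
  · rw [div_le_iff₀ hm, sub_mul, div_mul_cancel₀ _ hm.ne']
    linarith [hdist.2]

theorem card_le_of_forall_add_two_le {U : Finset ℕ} {K : ℕ} (hU : ∀ u ∈ U, u ≤ 2 * K)
    (hsep : ∀ u ∈ U, ∀ v ∈ U, u < v → u + 2 ≤ v) : U.card ≤ K + 1 := by
  simpa using card_le_card_of_injOn (· / 2) (t := range (K + 1))
    (fun u hu => by have := hU u hu; simp; omega)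
    (fun u hu v hv huv => by
      have := hsep u hu v hv; have := hsep v hv u hu; simp only at huv; omega)

theorem Polynomial.norm_eval_le_sum_norm_coeff {𝕜 : Type*} [NormedField 𝕜] {Q : 𝕜[X]} {N : ℕ}
    (hN : Q.natDegree < N) {z : 𝕜} (hz : ‖z‖ ≤ 1) :
    ‖Q.eval z‖ ≤ ∑ u ∈ range N, ‖Q.coeff u‖ := by
  rw [eval_eq_sum_range' hN]
  refine (norm_sum_le _ _).trans (sum_le_sum fun u _ => ?_)
  rw [norm_mul, norm_pow]
  exact mul_le_of_le_one_right (norm_nonneg _) (pow_le_one₀ (norm_nonneg _) hz)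

noncomputable def gridNodes (m : ℕ) (U : Finset ℕ) : Finset ℝ :=
  U.image fun u : ℕ => (u : ℝ) / m

section gridNodes

variable {m : ℕ} {U : Finset ℕ}

theorem sum_gridNodes {E : Type*} [AddCommMonoid E] (hm : m ≠ 0) (F : ℝ → E) :
    ∑ x ∈ gridNodes m U, F x = ∑ u ∈ U, F (u / m) :=
  sum_image fun u _ v _ h => by simpa [hm] using h

theorem gridNodes_subset_Ico (hU : ∀ u ∈ U, u < m) : ↑(gridNodes m U) ⊆ Set.Ico (0 : ℝ) 1 := by
  simp only [gridNodes, coe_image, Set.image_subset_iff]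
  intro u hu
  have hum : (u : ℝ) < m := by exact_mod_cast hU u hu
  exact ⟨by positivity, (div_lt_one (by linarith [(u.cast_nonneg : (0 : ℝ) ≤ u)])).2 hum⟩

theorem two_div_le_dw_of_mem_gridNodes (hU : ∀ u ∈ U, u + 2 ≤ m)
    (hsep : ∀ u ∈ U, ∀ v ∈ U, u < v → u + 2 ≤ v) :
    ∀ f ∈ gridNodes m U, ∀ g ∈ gridNodes m U, f ≠ g → 2 / (m : ℝ) ≤ dw f g := by
  simp only [gridNodes, mem_image]
  rintro _ ⟨u, hu, rfl⟩ _ ⟨v, hv, rfl⟩ huv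
  have huv' : u ≠ v := by rintro rfl; exact huv rfl
  exact two_div_le_dw_div ((Nat.lt_or_gt_of_ne huv').imp (hsep u hu v hv) (hsep v hv u hu))
    (hU u hu) (hU v hv)

end gridNodes

theorem exp_two_pi_I_mul_div (u m : ℕ) (t : ℤ) :
    Complex.exp (2 * Real.pi * Complex.I * (((u : ℝ) / m : ℝ) : ℂ) * t) =
      Complex.exp (2 * Real.pi * Complex.I * t / m) ^ u := by
  rw [← Complex.exp_nat_mul]
  push_cast
  ring_nf

theorem exists_sources_of_polynomial (Q : ℂ[X]) {K m : ℕ} (hK : 0 < K)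
    (hQK : Q.natDegree ≤ 2 * K) (hm : 2 * K + 2 ≤ m) (hQ : Q.eval (-1) ≠ 0) :
    ∃ (S S' : Finset ℝ) (a b : ℝ → ℂ),
      Disjoint S S' ∧ S.Nonempty ∧ S'.Nonempty ∧
      (↑S ⊆ Set.Ico (0 : ℝ) 1) ∧ (↑S' ⊆ Set.Ico (0 : ℝ) 1) ∧
      S.card ≤ K + 1 ∧ S'.card ≤ K + 1 ∧
      (∀ f ∈ S, ∀ g ∈ S, f ≠ g → 2 / (m : ℝ) ≤ dw f g) ∧
      (∀ f ∈ S', ∀ g ∈ S', f ≠ g → 2 / (m : ℝ) ≤ dw f g) ∧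
      (∑ f ∈ S, ‖a f‖) + (∑ g ∈ S', ‖b g‖) = 1 ∧
      ∀ t : ℤ,
        ‖(∑ f ∈ S, a f * Complex.exp (2 * Real.pi * Complex.I * (f : ℂ) * (t : ℂ))) -
            (∑ g ∈ S', b g * Complex.exp (2 * Real.pi * Complex.I * (g : ℂ) * (t : ℂ)))‖
          ≤ ‖Q.eval (Complex.exp (2 * Real.pi * Complex.I * t / m))‖ / ‖Q.eval (-1)‖ := by
  set N := 2 * K + 1
  set L := ∑ u ∈ range N, ‖Q.coeff u‖
  have hQL : ‖Q.eval (-1)‖ ≤ L :=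
    norm_eval_le_sum_norm_coeff (Nat.lt_succ_of_le hQK) (by simp)
  have hL : 0 < L := (norm_pos_iff.2 hQ).trans_le hQL
  have hm0 : m ≠ 0 := by omega
  set a : ℝ → ℂ := fun x => Q.coeff ⌊x * m⌋₊ / L
  have ha (u : ℕ) : a (u / m) = Q.coeff u / L := by simp [a, hm0]
  set E := (range N).filter Even
  set O := (range N).filter (¬Even ·)
  have hE : ∀ u ∈ E, ∀ v ∈ E, u < v → u + 2 ≤ v := by
    simp only [E, mem_filter, Nat.even_iff]; omega
  have hO : ∀ u ∈ O, ∀ v ∈ O, u < v → u + 2 ≤ v := by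
    simp only [O, mem_filter, Nat.even_iff]; omega
  have hEN : ∀ u ∈ E, u < N := fun u hu => mem_range.1 (mem_filter.1 hu).1
  have hON : ∀ u ∈ O, u < N := fun u hu => mem_range.1 (mem_filter.1 hu).1
  refine ⟨gridNodes m E, gridNodes m O, a, fun x => -a x,
    (disjoint_image fun u v h => by simpa [hm0] using h).2 (disjoint_filter_filter_not _ _ _),
    ⟨0, mem_image.2 ⟨0, by simp [E, N], by simp⟩⟩,
    ⟨1 / m, mem_image.2 ⟨1, by simp [O]; omega, by simp⟩⟩,
    gridNodes_subset_Ico fun u hu => by have := hEN u hu; omega,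
    gridNodes_subset_Ico fun u hu => by have := hON u hu; omega,
    card_image_le.trans (card_le_of_forall_add_two_le (fun u hu => by have := hEN u hu; omega) hE),
    card_image_le.trans (card_le_of_forall_add_two_le (fun u hu => by have := hON u hu; omega) hO),
    two_div_le_dw_of_mem_gridNodes (fun u hu => by have := hEN u hu; omega) hE,
    two_div_le_dw_of_mem_gridNodes (fun u hu => by have := hON u hu; omega) hO, ?_, fun t => ?_⟩
  · simp only [sum_gridNodes hm0, norm_neg, ha, norm_div, Complex.norm_real, Real.norm_eq_abs,
      abs_of_pos hL]
    rw [← sum_div, ← sum_div, ← add_div, sum_filter_add_sum_filter_not, div_self hL.ne']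
  · simp only [sum_gridNodes hm0, ha, neg_mul, sum_neg_distrib, sub_neg_eq_add,
      exp_two_pi_I_mul_div, div_mul_eq_mul_div]
    rw [sum_filter_add_sum_filter_not, ← sum_div, ← eval_eq_sum_range' (Nat.lt_succ_of_le hQK),
      norm_div, Complex.norm_real, Real.norm_of_nonneg hL.le]
    exact div_le_div_of_nonneg_left (norm_nonneg _) (norm_pos_iff.2 hQ) hQL

theorem stmt10_general (ε : ℝ) (hε0 : 0 < ε) (hε1 : ε < 1) (ℓ r k m : ℕ)
    (hℓ : 0 < ℓ) (hℓε : (ℓ : ℝ) = 4 / ε) (hr : 0 < r)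
    (hk : k = 2 * r * ℓ + 1) (hmpos : 0 < m) (hm2k : 2 * k ≤ m)
    (Δ : ℝ) (hΔ : Δ = 2 / (m : ℝ)) :
    ∃ (S S' : Finset ℝ) (a b : ℝ → ℂ),
      Disjoint S S' ∧ S.Nonempty ∧ S'.Nonempty ∧
      (↑S ⊆ Set.Ico (0 : ℝ) 1) ∧ (↑S' ⊆ Set.Ico (0 : ℝ) 1) ∧
      S.card ≤ k ∧ S'.card ≤ k ∧
      (∀ f ∈ S, ∀ g ∈ S, f ≠ g → Δ ≤ dw f g) ∧
      (∀ f ∈ S', ∀ g ∈ S', f ≠ g → Δ ≤ dw f g) ∧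
      (∑ f ∈ S, ‖a f‖) + (∑ g ∈ S', ‖b g‖) = 1 ∧
      ∀ t : ℤ, (|t| : ℝ) ≤ (1 - ε) / Δ →
        ‖(∑ f ∈ S, a f * Complex.exp (2 * Real.pi * Complex.I * (f : ℂ) * (t : ℂ))) -
            (∑ g ∈ S', b g * Complex.exp (2 * Real.pi * Complex.I * (g : ℂ) * (t : ℂ)))‖
          ≤ (2 : ℝ) ^ (-(ε * ((k : ℝ) - 1) / 2)) := by
  subst hk hΔ
  have hεℓ : ℓ * ε = 4 := by rw [hℓε]; field_simp
  set Q := arcChebyshev (cos (π * (1 - ε))) (2 * ℓ) ^ r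
  have hQ : (16 : ℝ) ^ r ≤ ‖Q.eval (-1)‖ := by
    rw [eval_pow, norm_pow]
    exact pow_le_pow_left₀ (by norm_num) (by
      nlinarith [one_add_mul_sq_le_norm_eval_arcChebyshev_neg_one hε0 hε1 ℓ]) r
  have hQK : Q.natDegree ≤ 2 * (2 * r * ℓ) := natDegree_pow_le.trans <| by
    nlinarith [natDegree_arcChebyshev_le (cos (π * (1 - ε))) (2 * ℓ)]
  obtain ⟨S, S', a, b, h₁, h₂, h₃, h₄, h₅, h₆, h₇, h₈, h₉, h₁₀, hbound⟩ :=
    exists_sources_of_polynomial Q (by positivity) hQK (by omega)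
      (norm_pos_iff.1 ((by positivity : (0 : ℝ) < 16 ^ r).trans_le hQ))
  refine ⟨S, S', a, b, h₁, h₂, h₃, h₄, h₅, h₆, h₇, h₈, h₉, h₁₀, fun t ht => (hbound t).trans ?_⟩
  have hw : ‖Q.eval (Complex.exp (2 * π * Complex.I * t / m))‖ ≤ 1 := by
    rw [eval_pow, norm_pow]
    exact pow_le_one₀ (norm_nonneg _) (norm_eval_arcChebyshev_exp_le_of_abs_le hε0.le hmpos ht _)
  calc _ ≤ 1 / (16 : ℝ) ^ r := div_le_div₀ zero_le_one hw (by positivity) hQ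
    _ = (2 : ℝ) ^ (-(ε * (((2 * r * ℓ + 1 : ℕ) : ℝ) - 1) / 2)) := by
      rw [show ε * (((2 * r * ℓ + 1 : ℕ) : ℝ) - 1) / 2 = ((4 * r : ℕ) : ℝ) by
        push_cast; linear_combination (r : ℝ) * hεℓ]
      rw [rpow_neg zero_le_two, rpow_natCast, pow_mul, one_div]
      norm_num

theorem stmt10 (ε : ℝ) (hε0 : 0 < ε) (hε1 : ε < 1) (ℓ r k m : ℕ)
    (hℓ : 0 < ℓ) (hℓε : (ℓ : ℝ) = 4 / ε) (hr : 0 < r)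
    (hk : k = 2 * r * ℓ + 1) (hmeven : Even m) (hmpos : 0 < m) (hm2k : 2 * k ≤ m)
    (Δ : ℝ) (hΔ : Δ = 2 / (m : ℝ)) :
    ∃ (S S' : Finset ℝ) (a b : ℝ → ℂ),
      Disjoint S S' ∧ S.Nonempty ∧ S'.Nonempty ∧
      (↑S ⊆ Set.Ico (0 : ℝ) 1) ∧ (↑S' ⊆ Set.Ico (0 : ℝ) 1) ∧
      S.card ≤ k ∧ S'.card ≤ k ∧
      (∀ f ∈ S, ∀ g ∈ S, f ≠ g → Δ ≤ dw f g) ∧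
      (∀ f ∈ S', ∀ g ∈ S', f ≠ g → Δ ≤ dw f g) ∧
      (∑ f ∈ S, ‖a f‖) + (∑ g ∈ S', ‖b g‖) = 1 ∧
      ∀ t : ℤ, (|t| : ℝ) ≤ (1 - ε) / Δ →
        ‖(∑ f ∈ S, a f * Complex.exp (2 * Real.pi * Complex.I * (f : ℂ) * (t : ℂ))) -
            (∑ g ∈ S', b g * Complex.exp (2 * Real.pi * Complex.I * (g : ℂ) * (t : ℂ)))‖
          ≤ (2 : ℝ) ^ (-(ε * ((k : ℝ) - 1) / 2)) :=
  stmt10_general ε hε0 hε1 ℓ r k m hℓ hℓε hr hk hmpos hm2k Δ hΔ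
end

section
/- Let ℓ be a positive integer, let Δ > 0, let f_1, …, f_k ∈ [0,1) satisfy d_w(f_j, f_{j'}) ≥ Δ for all j ≠ j', let u_1, …, u_k ∈ ℂ, and set f(t) = Σ_{j=1}^k u_j e^{2πi f_j t}. With the Fejér coefficients c_t = (ℓ − |t|)/ℓ² for integers |t| ≤ ℓ, one has | Σ_{t=−ℓ}^{ℓ} c_t |f(t)|² − Σ_{j=1}^k |u_j|² | ≤ (π² / (12 ℓ² Δ²)) · Σ_{j=1}^k |u_j|². -/
/-!
Expanding `|F t|²` turns the weighted energy into `∑ⱼ ∑ⱼ' uⱼ conj(uⱼ') K(fⱼ - fⱼ')`, where `K` is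
the normalised Fejér kernel. Since `ℓ² K(x) = |∑_{a<ℓ} e(a x)|²`, we have `K(0) = 1`, so the
diagonal terms give exactly `∑ |uⱼ|²`, while the geometric-sum bound together with Jordan's
inequality `|sin πx| ≥ 2‖x‖` gives `|K(x)| ≤ 1 / (4 ℓ² ‖x‖²)`, where `‖x‖` is the distance from
`x` to the nearest integer. A Schur test bounds the off-diagonal part. For fixed `j`, the points
`fⱼ' - fⱼ` are `Δ`-separated on the circle, and those on each side of `0` sit at distances at
least `Δ, 2Δ, 3Δ, …`, so `∑_{j' ≠ j} ‖fⱼ - fⱼ'‖⁻² ≤ 2 ζ(2) / Δ² = π² / (3 Δ²)`.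
-/

open Finset Real ComplexConjugate

theorem dw_le_abs_add (a b : ℝ) (t : ℤ) : dw a b ≤ |a - b + t| :=
  ciInf_le ⟨0, by rintro _ ⟨s, rfl⟩; positivity⟩ t

theorem card_filter_sub_eq (ℓ : ℕ) (t : ℤ) :
    #{p ∈ range ℓ ×ˢ range ℓ | (p.1 : ℤ) - p.2 = t} = ℓ - t.natAbs := by
  have : {p ∈ range ℓ ×ˢ range ℓ | (p.1 : ℤ) - p.2 = t}
      = (range (ℓ - t.natAbs)).image fun i => (i + t.toNat, i + (-t).toNat) := by
    ext ⟨a, b⟩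
    simp only [mem_filter, mem_product, mem_range, mem_image, Prod.mk.injEq]
    constructor
    · rintro ⟨⟨ha, hb⟩, hab⟩
      exact ⟨a - t.toNat, by omega, by omega, by omega⟩
    · rintro ⟨i, hi, rfl, rfl⟩
      omega
  rw [this, card_image_of_injective _ fun i j h => by simpa using congrArg Prod.fst h,
    card_range]

theorem sum_range_sum_range_sub {M : Type*} [AddCommMonoid M] (ℓ : ℕ) (g : ℤ → M) :
    ∑ a ∈ range ℓ, ∑ b ∈ range ℓ, g (a - b)
      = ∑ t ∈ Icc (-(ℓ : ℤ)) ℓ, (ℓ - t.natAbs) • g t := by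
  have hmaps : ∀ p ∈ range ℓ ×ˢ range ℓ, (p.1 : ℤ) - p.2 ∈ Icc (-(ℓ : ℤ)) ℓ := by
    intro p hp
    simp only [mem_product, mem_range] at hp
    simp only [mem_Icc]
    omega
  rw [← sum_product', ← sum_fiberwise_of_maps_to' hmaps]
  simp only [sum_const, card_filter_sub_eq]

theorem norm_geom_sum_le {𝕜 : Type*} [NormedField 𝕜] {z : 𝕜} (hz : ‖z‖ ≤ 1) (hz1 : z ≠ 1)
    (n : ℕ) : ‖∑ a ∈ range n, z ^ a‖ ≤ 2 / ‖z - 1‖ := by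
  rw [geom_sum_eq hz1, norm_div]
  gcongr
  calc ‖z ^ n - 1‖ ≤ ‖z ^ n‖ + ‖(1 : 𝕜)‖ := norm_sub_le _ _
    _ ≤ 2 := by rw [norm_pow, norm_one]; linarith [pow_le_one₀ (norm_nonneg z) hz (n := n)]

noncomputable def expTwoPiI (x : ℝ) : ℂ := Complex.exp (2 * π * Complex.I * x)

theorem expTwoPiI_add (x y : ℝ) : expTwoPiI (x + y) = expTwoPiI x * expTwoPiI y := by
  simp only [expTwoPiI, Complex.ofReal_add, mul_add, Complex.exp_add]

theorem conj_expTwoPiI (x : ℝ) : conj (expTwoPiI x) = expTwoPiI (-x) := by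
  simp only [expTwoPiI, ← Complex.exp_conj, map_mul, map_ofNat, Complex.conj_ofReal,
    Complex.conj_I, Complex.ofReal_neg]
  ring_nf

theorem expTwoPiI_mul_natCast (x : ℝ) (n : ℕ) : expTwoPiI (x * n) = expTwoPiI x ^ n := by
  simp only [expTwoPiI, ← Complex.exp_nat_mul]
  push_cast
  ring_nf

theorem norm_expTwoPiI (x : ℝ) : ‖expTwoPiI x‖ = 1 := by
  rw [expTwoPiI, Complex.norm_exp]
  simp

theorem norm_expTwoPiI_sub_one (x : ℝ) : ‖expTwoPiI x - 1‖ = 2 * |sin (π * x)| := by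
  have : expTwoPiI x = Complex.exp (Complex.I * (2 * π * x : ℝ)) := by
    rw [expTwoPiI]; push_cast; ring_nf
  rw [this, Complex.norm_exp_I_mul_ofReal_sub_one, norm_mul, Real.norm_eq_abs,
    Real.norm_eq_abs, abs_two]
  ring_nf

theorem two_mul_abs_sub_round_le_abs_sin (x : ℝ) : 2 * |x - round x| ≤ |sin (π * x)| := by
  have hsin : sin (π * x) = (-1) ^ round x * sin (π * (x - round x)) := by
    rw [← sin_add_int_mul_pi]; ring_nf
  have hx : |π * (x - round x)| ≤ π / 2 := by
    rw [abs_mul, abs_of_pos pi_pos]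
    nlinarith [abs_sub_round x, pi_pos]
  have := mul_abs_le_abs_sin hx
  rw [abs_mul, abs_of_pos pi_pos, ← mul_assoc, div_mul_cancel₀ _ pi_ne_zero] at this
  simpa [hsin, abs_mul] using this

theorem four_mul_abs_sub_round_le_norm_expTwoPiI_sub_one (x : ℝ) :
    4 * |x - round x| ≤ ‖expTwoPiI x - 1‖ := by
  rw [norm_expTwoPiI_sub_one]
  linarith [two_mul_abs_sub_round_le_abs_sin x]

theorem norm_sum_expTwoPiI_pow_le {x : ℝ} (hx : 0 < |x - round x|) (n : ℕ) :
    ‖∑ a ∈ range n, expTwoPiI x ^ a‖ ≤ 1 / (2 * |x - round x|) := by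
  have hlower := four_mul_abs_sub_round_le_norm_expTwoPiI_sub_one x
  have hne : expTwoPiI x ≠ 1 := by
    intro h
    rw [h, sub_self, norm_zero] at hlower
    linarith
  calc ‖∑ a ∈ range n, expTwoPiI x ^ a‖ ≤ 2 / ‖expTwoPiI x - 1‖ :=
        norm_geom_sum_le (norm_expTwoPiI x).le hne n
    _ ≤ 2 / (4 * |x - round x|) := by gcongr
    _ = 1 / (2 * |x - round x|) := by field_simp; ring

noncomputable def fejerKernel (ℓ : ℕ) (x : ℝ) : ℂ :=
  ∑ t ∈ Icc (-(ℓ : ℤ)) ℓ, ((((ℓ : ℝ) - (|t| : ℤ)) / (ℓ : ℝ) ^ 2 : ℝ) : ℂ) * expTwoPiI (x * t)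

theorem sq_mul_fejerKernel (ℓ : ℕ) (x : ℝ) :
    (ℓ : ℂ) ^ 2 * fejerKernel ℓ x = (‖∑ a ∈ range ℓ, expTwoPiI x ^ a‖ : ℂ) ^ 2 := by
  rcases eq_or_ne ℓ 0 with rfl | hℓ
  · simp [fejerKernel]
  have hpair : ∀ a b : ℕ, expTwoPiI (x * ((a : ℤ) - b : ℤ))
      = expTwoPiI x ^ a * conj (expTwoPiI x ^ b) := by
    intro a b
    rw [map_pow, conj_expTwoPiI, ← expTwoPiI_mul_natCast, ← expTwoPiI_mul_natCast,
      ← expTwoPiI_add]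
    push_cast
    ring_nf
  rw [← Complex.mul_conj', map_sum, sum_mul_sum, fejerKernel, mul_sum]
  simp_rw [← hpair]
  rw [sum_range_sum_range_sub ℓ fun t => expTwoPiI (x * t)]
  refine sum_congr rfl fun t ht => ?_
  have ht' : t.natAbs ≤ ℓ := by rw [mem_Icc] at ht; omega
  rw [nsmul_eq_mul, ← mul_assoc]
  congr 1
  simp only [Complex.ofReal_div, Complex.ofReal_sub, Complex.ofReal_pow, Complex.ofReal_natCast,
    Complex.ofReal_intCast, Nat.cast_sub ht', Nat.cast_natAbs]
  field_simp

theorem fejerKernel_zero {ℓ : ℕ} (hℓ : ℓ ≠ 0) : fejerKernel ℓ 0 = 1 := by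
  have h := sq_mul_fejerKernel ℓ 0
  have he : expTwoPiI 0 = 1 := by simp [expTwoPiI]
  simp only [he, one_pow, sum_const, card_range, nsmul_eq_mul, mul_one, Complex.norm_natCast,
    Complex.ofReal_natCast] at h
  exact (mul_eq_left₀ (pow_ne_zero 2 (Nat.cast_ne_zero.mpr hℓ))).mp h

theorem norm_fejerKernel_le (ℓ : ℕ) {x : ℝ} (hx : 0 < |x - round x|) :
    ‖fejerKernel ℓ x‖ ≤ 1 / (4 * ℓ ^ 2 * |x - round x| ^ 2) := by
  rcases eq_or_ne ℓ 0 with rfl | hℓ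
  · simp [fejerKernel]
  have hℓ' : (0 : ℝ) < ℓ ^ 2 := by positivity
  have h := congrArg norm (sq_mul_fejerKernel ℓ x)
  rw [norm_mul, norm_pow, norm_pow, Complex.norm_natCast, Complex.norm_real, norm_norm] at h
  have hK : ‖fejerKernel ℓ x‖ = ‖∑ a ∈ range ℓ, expTwoPiI x ^ a‖ ^ 2 / ℓ ^ 2 := by
    rw [← h]; field_simp
  calc ‖fejerKernel ℓ x‖ ≤ (1 / (2 * |x - round x|)) ^ 2 / ℓ ^ 2 := by
        rw [hK]; gcongr; exact norm_sum_expTwoPiI_pow_le hx ℓ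
    _ = 1 / (4 * ℓ ^ 2 * |x - round x| ^ 2) := by field_simp; ring

theorem sum_one_div_sq_le_of_separated {ι : Type*} {s : Finset ι} {y : ι → ℝ} {Δ : ℝ}
    (hΔ : 0 < Δ) (hy : ∀ i ∈ s, Δ ≤ y i)
    (hsep : ∀ i ∈ s, ∀ i' ∈ s, i ≠ i' → Δ ≤ |y i - y i'|) :
    ∑ i ∈ s, 1 / y i ^ 2 ≤ π ^ 2 / 6 / Δ ^ 2 := by
  set m : ι → ℕ := fun i => ⌊y i / Δ⌋₊
  have hm : ∀ i ∈ s, 0 < (m i : ℝ) * Δ ∧ (m i : ℝ) * Δ ≤ y i := by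
    intro i hi
    have h1 : 1 ≤ m i := Nat.le_floor (by rw [Nat.cast_one, le_div_iff₀ hΔ, one_mul]; exact hy i hi)
    have h2 : (m i : ℝ) ≤ y i / Δ := Nat.floor_le (div_nonneg (hΔ.le.trans (hy i hi)) hΔ.le)
    constructor
    · have : (1 : ℝ) ≤ m i := by exact_mod_cast h1
      positivity
    · rwa [le_div_iff₀ hΔ] at h2
  -- equal floors of `y / Δ` force two points within `Δ` of each other
  have hinj : Set.InjOn m s := by
    intro i hi i' hi' hmi
    by_contra hne
    have hfloor : ⌊y i / Δ⌋ = ⌊y i' / Δ⌋ := by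
      rw [← Int.natCast_floor_eq_floor (div_nonneg (hΔ.le.trans (hy i hi)) hΔ.le),
        ← Int.natCast_floor_eq_floor (div_nonneg (hΔ.le.trans (hy i' hi')) hΔ.le)]
      exact congrArg Nat.cast hmi
    have hlt := Int.abs_sub_lt_one_of_floor_eq_floor hfloor
    rw [← sub_div, abs_div, abs_of_pos hΔ, div_lt_one hΔ] at hlt
    exact (hsep i hi i' hi' hne).not_gt hlt
  calc ∑ i ∈ s, 1 / y i ^ 2 ≤ ∑ i ∈ s, 1 / ((m i : ℝ) * Δ) ^ 2 := by
        refine sum_le_sum fun i hi => ?_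
        obtain ⟨hpos, hle⟩ := hm i hi
        gcongr
    _ = (∑ n ∈ s.image m, 1 / (n : ℝ) ^ 2) / Δ ^ 2 := by
        rw [sum_image hinj, sum_div]
        refine sum_congr rfl fun i _ => ?_
        field_simp
    _ ≤ π ^ 2 / 6 / Δ ^ 2 := by
        gcongr
        exact sum_le_hasSum _ (fun n _ => by positivity) hasSum_zeta_two

theorem sum_one_div_sq_abs_sub_round_le {ι : Type*} {s : Finset ι} {g : ι → ℝ} {Δ : ℝ}
    (hΔ : 0 < Δ) (h0 : ∀ i ∈ s, Δ ≤ |g i - round (g i)|)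
    (hsep : ∀ i ∈ s, ∀ i' ∈ s, i ≠ i' → ∀ t : ℤ, Δ ≤ |g i - g i' + t|) :
    ∑ i ∈ s, 1 / |g i - round (g i)| ^ 2 ≤ π ^ 2 / (3 * Δ ^ 2) := by
  set y : ι → ℝ := fun i => g i - round (g i)
  have hysep : ∀ i ∈ s, ∀ i' ∈ s, i ≠ i' → Δ ≤ |y i - y i'| := by
    intro i hi i' hi' hne
    convert hsep i hi i' hi' hne (round (g i') - round (g i)) using 2
    push_cast
    ring
  -- the points on either side of the nearest integer form a separated set on a half-line
  have hright := sum_one_div_sq_le_of_separated hΔ (s := {i ∈ s | 0 ≤ y i}) (y := y)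
    (fun i hi => by
      rw [mem_filter] at hi
      exact (h0 i hi.1).trans_eq (abs_of_nonneg hi.2))
    (fun i hi i' hi' => hysep i (mem_filter.mp hi).1 i' (mem_filter.mp hi').1)
  have hleft := sum_one_div_sq_le_of_separated hΔ (s := {i ∈ s | ¬0 ≤ y i}) (y := fun i => -y i)
    (fun i hi => by
      rw [mem_filter, not_le] at hi
      exact (h0 i hi.1).trans_eq (abs_of_neg hi.2))
    (fun i hi i' hi' hne => by
      rw [neg_sub_neg, abs_sub_comm]
      exact hysep i (mem_filter.mp hi).1 i' (mem_filter.mp hi').1 hne)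
  simp only [neg_sq] at hleft
  simp only [sq_abs]
  rw [← sum_filter_add_sum_filter_not s (fun i => 0 ≤ y i)]
  calc _ ≤ π ^ 2 / 6 / Δ ^ 2 + π ^ 2 / 6 / Δ ^ 2 := add_le_add hright hleft
    _ = π ^ 2 / (3 * Δ ^ 2) := by field_simp; ring

theorem sum_norm_fejerKernel_le (ℓ : ℕ) {ι : Type*} {s : Finset ι} {g : ι → ℝ} {Δ : ℝ}
    (hΔ : 0 < Δ) (h0 : ∀ i ∈ s, Δ ≤ |g i - round (g i)|)
    (hsep : ∀ i ∈ s, ∀ i' ∈ s, i ≠ i' → ∀ t : ℤ, Δ ≤ |g i - g i' + t|) :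
    ∑ i ∈ s, ‖fejerKernel ℓ (g i)‖ ≤ π ^ 2 / (12 * ℓ ^ 2 * Δ ^ 2) := by
  calc ∑ i ∈ s, ‖fejerKernel ℓ (g i)‖
        ≤ ∑ i ∈ s, 1 / (4 * ℓ ^ 2) * (1 / |g i - round (g i)| ^ 2) :=
        sum_le_sum fun i hi =>
          (norm_fejerKernel_le ℓ (hΔ.trans_le (h0 i hi))).trans_eq (by ring)
    _ ≤ 1 / (4 * ℓ ^ 2) * (π ^ 2 / (3 * Δ ^ 2)) := by
        rw [← mul_sum]
        gcongr
        exact sum_one_div_sq_abs_sub_round_le hΔ h0 hsep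
    _ = π ^ 2 / (12 * ℓ ^ 2 * Δ ^ 2) := by ring

theorem norm_sum_sum_erase_mul_conj_le {𝕜 ι : Type*} [RCLike 𝕜] [Fintype ι] [DecidableEq ι]
    (a : ι → 𝕜) (K : ι → ι → 𝕜) {C : ℝ}
    (hrow : ∀ i, ∑ i' ∈ univ.erase i, ‖K i i'‖ ≤ C)
    (hcol : ∀ i', ∑ i ∈ univ.erase i', ‖K i i'‖ ≤ C) :
    ‖∑ i, ∑ i' ∈ univ.erase i, a i * conj (a i') * K i i'‖ ≤ C * ∑ i, ‖a i‖ ^ 2 := by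
  have hswap : ∑ i, ∑ i' ∈ univ.erase i, ‖a i'‖ ^ 2 * ‖K i i'‖
      = ∑ i', ∑ i ∈ univ.erase i', ‖a i'‖ ^ 2 * ‖K i i'‖ :=
    sum_comm' fun i i' => by simp only [mem_univ, mem_erase, true_and, and_true, ne_comm]
  calc ‖∑ i, ∑ i' ∈ univ.erase i, a i * conj (a i') * K i i'‖
        ≤ ∑ i, ∑ i' ∈ univ.erase i, ‖a i‖ * ‖a i'‖ * ‖K i i'‖ := by
        refine (norm_sum_le _ _).trans (sum_le_sum fun i _ => (norm_sum_le _ _).trans_eq ?_)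
        simp only [norm_mul, RCLike.norm_conj]
    _ ≤ ∑ i, ∑ i' ∈ univ.erase i, (‖a i‖ ^ 2 * ‖K i i'‖ + ‖a i'‖ ^ 2 * ‖K i i'‖) / 2 := by
        gcongr with i _ i' _
        nlinarith [sq_nonneg (‖a i‖ - ‖a i'‖), norm_nonneg (K i i')]
    _ = (∑ i, ‖a i‖ ^ 2 * ∑ i' ∈ univ.erase i, ‖K i i'‖
          + ∑ i', ‖a i'‖ ^ 2 * ∑ i ∈ univ.erase i', ‖K i i'‖) / 2 := by
        simp only [mul_sum, ← hswap, ← sum_add_distrib, sum_div]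
    _ ≤ (∑ i, ‖a i‖ ^ 2 * C + ∑ i', ‖a i'‖ ^ 2 * C) / 2 := by
        gcongr with i _ i' _
        exacts [hrow i, hcol i']
    _ = C * ∑ i, ‖a i‖ ^ 2 := by
        rw [← sum_add_distrib, sum_div, mul_sum]
        exact sum_congr rfl fun i _ => by ring

theorem sum_mul_norm_sq_eq {ι : Type*} [Fintype ι] (T : Finset ℤ) (c : ℤ → ℝ) (u : ι → ℂ)
    (f : ι → ℝ) :
    ((∑ t ∈ T, c t * ‖∑ j, u j * expTwoPiI (f j * t)‖ ^ 2 : ℝ) : ℂ)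
      = ∑ j, ∑ j', u j * conj (u j') * ∑ t ∈ T, (c t : ℂ) * expTwoPiI ((f j - f j') * t) := by
  have hpair : ∀ j j' (t : ℤ), expTwoPiI ((f j - f j') * t)
      = expTwoPiI (f j * t) * conj (expTwoPiI (f j' * t)) := by
    intro j j' t
    rw [conj_expTwoPiI, ← expTwoPiI_add]
    ring_nf
  push_cast
  simp_rw [← Complex.mul_conj', map_sum, sum_mul_sum, mul_sum, hpair]
  rw [sum_comm]
  refine sum_congr rfl fun j _ => ?_
  rw [sum_comm]
  refine sum_congr rfl fun j' _ => sum_congr rfl fun t _ => ?_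
  rw [map_mul]
  ring

theorem sum_sum_mul_conj_mul_fejerKernel {ι : Type*} [Fintype ι] [DecidableEq ι] {ℓ : ℕ}
    (hℓ : ℓ ≠ 0) (u : ι → ℂ) (f : ι → ℝ) :
    ∑ j, ∑ j', u j * conj (u j') * fejerKernel ℓ (f j - f j')
      = ∑ j, (‖u j‖ ^ 2 : ℂ)
        + ∑ j, ∑ j' ∈ univ.erase j, u j * conj (u j') * fejerKernel ℓ (f j - f j') := by
  rw [← sum_add_distrib]
  refine sum_congr rfl fun j _ => ?_
  rw [← add_sum_erase _ _ (mem_univ j), sub_self, fejerKernel_zero hℓ, mul_one,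
    Complex.mul_conj']

theorem stmt11_general (ℓ k : ℕ) (hℓ : 0 < ℓ) (Δ : ℝ) (hΔ : 0 < Δ)
    (f : Fin k → ℝ)
    (hsep : ∀ j j', j ≠ j' → Δ ≤ dw (f j) (f j'))
    (u : Fin k → ℂ) (F : ℤ → ℂ)
    (hF : ∀ t : ℤ, F t = ∑ j, u j * Complex.exp (2 * Real.pi * Complex.I * (f j : ℂ) * (t : ℂ))) :
    |(∑ t ∈ Finset.Icc (-(ℓ : ℤ)) (ℓ : ℤ),
        (((ℓ : ℝ) - (|t| : ℤ)) / (ℓ : ℝ) ^ 2) * ‖F t‖ ^ 2) -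
      ∑ j, ‖u j‖ ^ 2|
      ≤ (Real.pi ^ 2 / (12 * (ℓ : ℝ) ^ 2 * Δ ^ 2)) * ∑ j, ‖u j‖ ^ 2 := by
  have hsep' : ∀ j j', j ≠ j' → ∀ t : ℤ, Δ ≤ |f j - f j' + t| :=
    fun j j' h t => (hsep j j' h).trans (dw_le_abs_add _ _ t)
  have hround : ∀ j j', j ≠ j' → Δ ≤ |f j - f j' - round (f j - f j')| := fun j j' h => by
    simpa only [Int.cast_neg, ← sub_eq_add_neg] using hsep' j j' h (-round (f j - f j'))
  have hF' : F = fun t : ℤ => ∑ j, u j * expTwoPiI (f j * t) := by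
    funext t
    simp only [hF, expTwoPiI, Complex.ofReal_mul, Complex.ofReal_intCast, mul_assoc]
  have henergy : ((∑ t ∈ Icc (-(ℓ : ℤ)) ℓ,
      ((ℓ : ℝ) - (|t| : ℤ)) / (ℓ : ℝ) ^ 2 * ‖F t‖ ^ 2 : ℝ) : ℂ)
      = ∑ j, ∑ j', u j * conj (u j') * fejerKernel ℓ (f j - f j') := by
    rw [hF']
    exact sum_mul_norm_sq_eq _ _ u f
  rw [sum_sum_mul_conj_mul_fejerKernel hℓ.ne' u f] at henergy
  calc _ = ‖∑ j, ∑ j' ∈ univ.erase j, u j * conj (u j') * fejerKernel ℓ (f j - f j')‖ := by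
        rw [← Real.norm_eq_abs, ← Complex.norm_real, Complex.ofReal_sub, henergy]
        push_cast
        rw [add_sub_cancel_left]
    _ ≤ _ := norm_sum_sum_erase_mul_conj_le u _
        (fun j => sum_norm_fejerKernel_le ℓ hΔ
          (fun j' hj' => hround j j' (ne_of_mem_erase hj').symm)
          fun i _ i' _ hne t => by
            simpa only [sub_sub_sub_cancel_left] using hsep' i' i hne.symm t)
        (fun j' => sum_norm_fejerKernel_le ℓ hΔ
          (fun j hj => hround j j' (ne_of_mem_erase hj))
          fun i _ i' _ hne t => by
            simpa only [sub_sub_sub_cancel_right] using hsep' i i' hne t)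

theorem stmt11 (ℓ k : ℕ) (hℓ : 0 < ℓ) (Δ : ℝ) (hΔ : 0 < Δ)
    (f : Fin k → ℝ) (hf : ∀ j, f j ∈ Set.Ico (0 : ℝ) 1)
    (hsep : ∀ j j', j ≠ j' → Δ ≤ dw (f j) (f j'))
    (u : Fin k → ℂ) (F : ℤ → ℂ)
    (hF : ∀ t : ℤ, F t = ∑ j, u j * Complex.exp (2 * Real.pi * Complex.I * (f j : ℂ) * (t : ℂ))) :
    |(∑ t ∈ Finset.Icc (-(ℓ : ℤ)) (ℓ : ℤ),
        (((ℓ : ℝ) - (|t| : ℤ)) / (ℓ : ℝ) ^ 2) * ‖F t‖ ^ 2) -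
      ∑ j, ‖u j‖ ^ 2|
      ≤ (Real.pi ^ 2 / (12 * (ℓ : ℝ) ^ 2 * Δ ^ 2)) * ∑ j, ‖u j‖ ^ 2 :=
  stmt11_general ℓ k hℓ Δ hΔ f hsep u F hF
end
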